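/- arXiv:1303.7415 — 2 statements merged into one kernel-verified Lean document; each statement's English description precedes it below -/
import Mathlib

section
/- Let f : closure(D²) → ℝ be continuous on the closed unit disk in ℂ, C¹ on the closed disk, C² and weakly subharmonic (Δf ≥ 0) on the open disk. Suppose f attains its maximum at a boundary point z₀ ∈ ∂D² and f(z) < f(z₀) for all z ≠ z₀. Then for every vector X ∈ ℂ pointing transversely out of the disk at z₀ (i.e. with ⟨X, z₀⟩ > 0), the directional derivative of f at z₀ in direction X is strictly positive. -/
/-
Hopf's barrier argument. The function `h z = ‖z‖⁻²` is strictly subharmonic away from `0`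
(`Δh = 4 / ‖z‖⁴`), so `g = f + ε h` has `Δg > 0` on the annulus `1/2 < ‖z‖ < 1`, and by
the second derivative test its maximum over the closed annulus is attained on one of the two
boundary circles. For `ε` small compared with the gap between `f z₀` and the maximum of `f` on
the inner circle, that maximum is `g z₀`, so `z₀` is a local maximum of `g` on the disk. As `-X`
points into the disk, `Dg(z₀)(-X) ≤ 0`, that is `Df(z₀) X ≥ 2ε⟪z₀, X⟫ > 0`.
-/

/-- Laplacian of a function on `ℂ ≅ ℝ²`. -/
noncomputable def lap (f : ℂ → ℝ) (z : ℂ) : ℝ :=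
  fderiv ℝ (fun w => fderiv ℝ f w 1) z 1 +
    fderiv ℝ (fun w => fderiv ℝ f w Complex.I) z Complex.I

open Metric Filter Topology InnerProductSpace Laplacian
open scoped RealInnerProductSpace

section SecondDerivativeTest

variable {E : Type*} [NormedAddCommGroup E] [NormedSpace ℝ E] {g : E → ℝ} {p : E}

theorem IsLocalMax.fderiv_fderiv_apply_self_nonpos (hmax : IsLocalMax g p)
    (hg : ContDiffAt ℝ 2 g p) (e : E) : fderiv ℝ (fderiv ℝ g) p e e ≤ 0 := by
  set φ : ℝ → ℝ := fun t => g (p + t • e)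
  have hline (t : ℝ) : HasDerivAt (fun t : ℝ => p + t • e) e t := by
    simpa using ((hasDerivAt_id t).smul_const e).const_add p
  have hdiff : ∀ᶠ t in 𝓝 (0 : ℝ), DifferentiableAt ℝ g (p + t • e) :=
    (hline 0).continuousAt.eventually <| by
      simpa using (hg.eventually (by simp)).mono fun y hy => hy.differentiableAt (by simp)
  have hφ' : deriv φ =ᶠ[𝓝 0] fun t => fderiv ℝ g (p + t • e) e :=
    hdiff.mono fun t ht => (ht.hasFDerivAt.comp_hasDerivAt t (hline t)).deriv
  have hφ'' : deriv (deriv φ) 0 = fderiv ℝ (fderiv ℝ g) p e e := by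
    have hD : DifferentiableAt ℝ (fderiv ℝ g) p :=
      (hg.fderiv_right (m := 1) (by norm_num)).differentiableAt one_ne_zero
    have h := (hD.hasFDerivAt.clm_apply (hasFDerivAt_const e p)).comp_hasDerivAt_of_eq 0
      (hline 0) (by simp)
    simp only [ContinuousLinearMap.comp_zero, zero_add, ContinuousLinearMap.flip_apply] at h
    rw [hφ'.deriv_eq]
    exact h.deriv
  by_contra! hpos
  -- Then `0` is also a local minimum of `φ`, so `φ` is locally constant and `φ'' 0 = 0`.
  have hmaxφ : IsLocalMax φ 0 :=
    IsLocalMax.comp_continuous (by simpa using hmax) (hline 0).continuousAt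
  have hminφ : IsLocalMin φ 0 :=
    isLocalMin_of_deriv_deriv_pos (hφ'' ▸ hpos) (by simp [hφ'.eq_of_nhds, hmax.fderiv_eq_zero])
      (hg.continuousAt.comp_of_eq (hline 0).continuousAt (by simp))
  have hconst : φ =ᶠ[𝓝 0] fun _ => φ 0 :=
    (hminφ.and hmaxφ).mono fun t ht => le_antisymm ht.2 ht.1
  have hφ'_zero : deriv φ =ᶠ[𝓝 0] fun _ => 0 := by
    filter_upwards [hconst.eventuallyEq_nhds] with t ht
    simp [ht.deriv_eq]
  simp [hφ'_zero.deriv_eq] at hφ''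
  linarith

end SecondDerivativeTest

section MaximumPrinciple

variable {E : Type*} [NormedAddCommGroup E] [InnerProductSpace ℝ E] [FiniteDimensional ℝ E]
  {g : E → ℝ}

theorem IsLocalMax.laplacian_nonpos {p : E} (hmax : IsLocalMax g p) (hg : ContDiffAt ℝ 2 g p) :
    Δ g p ≤ 0 := by
  rw [laplacian_eq_iteratedFDeriv_stdOrthonormalBasis]
  refine Finset.sum_nonpos fun i _ => ?_
  simpa [iteratedFDeriv_two_apply] using hmax.fderiv_fderiv_apply_self_nonpos hg _

theorem IsCompact.exists_isMaxOn_mem_diff_of_laplacian_pos {K U : Set E} (hK : IsCompact K)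
    (hne : K.Nonempty) (hU : IsOpen U) (hUK : U ⊆ K) (hg : ContinuousOn g K)
    (hg₂ : ∀ z ∈ U, ContDiffAt ℝ 2 g z) (hΔ : ∀ z ∈ U, 0 < Δ g z) :
    ∃ p ∈ K \ U, IsMaxOn g K p := by
  obtain ⟨p, hpK, hp⟩ := hK.exists_isMaxOn hne hg
  refine ⟨p, ⟨hpK, fun hpU => ?_⟩, hp⟩
  have hloc : IsLocalMax g p := hp.isLocalMax (mem_of_superset (hU.mem_nhds hpU) hUK)
  exact (hΔ p hpU).not_ge (hloc.laplacian_nonpos (hg₂ p hpU))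

end MaximumPrinciple

theorem lap_eq_laplacian {f : ℂ → ℝ} {z : ℂ} (hf : ContDiffAt ℝ 2 f z) :
    lap f z = Δ f z := by
  have hD : DifferentiableAt ℝ (fderiv ℝ f) z :=
    (hf.fderiv_right (m := 1) (by norm_num)).differentiableAt one_ne_zero
  simp [lap, laplacian_eq_iteratedFDeriv_complexPlane, iteratedFDeriv_two_apply,
    fderiv_clm_apply hD (differentiableAt_const _)]

section InverseNormSq

variable {E : Type*} [NormedAddCommGroup E] [InnerProductSpace ℝ E] {x : E}

theorem hasFDerivAt_inv_norm_sq (hx : x ≠ 0) :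
    HasFDerivAt (fun y : E => (‖y‖ ^ 2)⁻¹) ((-2 / ‖x‖ ^ 4) • innerSL ℝ x) x := by
  have hx' : ‖x‖ ^ 2 ≠ 0 := by positivity
  refine ((hasDerivAt_inv hx').comp_hasFDerivAt x
    (hasStrictFDerivAt_norm_sq x).hasFDerivAt).congr_fderiv ?_
  ext e
  simp
  ring

theorem fderiv_fderiv_inv_norm_sq_apply_self (hx : x ≠ 0) (e : E) :
    fderiv ℝ (fderiv ℝ fun y : E => (‖y‖ ^ 2)⁻¹) x e e =
      8 * ⟪x, e⟫ ^ 2 / ‖x‖ ^ 6 - 2 * ‖e‖ ^ 2 / ‖x‖ ^ 4 := by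
  have hderiv : fderiv ℝ (fun y : E => (‖y‖ ^ 2)⁻¹) =ᶠ[𝓝 x]
      fun y => (-2 / (‖y‖ ^ 2) ^ 2) • innerSL ℝ y := by
    filter_upwards [isOpen_ne.mem_nhds hx] with y hy
    rw [(hasFDerivAt_inv_norm_sq hy).fderiv]
    ring_nf
  have hx' : ‖x‖ ^ 2 ≠ 0 := by positivity
  have hc : HasDerivAt (fun s : ℝ => -2 / s ^ 2) (4 / (‖x‖ ^ 2) ^ 3) (‖x‖ ^ 2) := by
    refine ((hasDerivAt_const _ (-2 : ℝ)).div (hasDerivAt_pow 2 _)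
      (pow_ne_zero 2 hx')).congr_deriv ?_
    field_simp
    ring
  have h := (hc.comp_hasFDerivAt x (hasStrictFDerivAt_norm_sq x).hasFDerivAt).smul
      (innerSL ℝ).hasFDerivAt
  change HasFDerivAt (fun y : E => (-2 / (‖y‖ ^ 2) ^ 2) • innerSL ℝ y) _ x at h
  rw [hderiv.fderiv_eq, h.fderiv]
  simp only [add_apply, smul_apply, ContinuousLinearMap.smulRight_apply, Function.comp_apply,
    smul_eq_mul]
  -- `innerSL ℝ` was differentiated as an `ℝ`-linear map, so `simp` no longer reads its values
  -- as inner products.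
  change -2 / (‖x‖ ^ 2) ^ 2 * ⟪e, e⟫ + 4 / (‖x‖ ^ 2) ^ 3 * 2 • ⟪x, e⟫ * ⟪x, e⟫ =
    8 * ⟪x, e⟫ ^ 2 / ‖x‖ ^ 6 - 2 * ‖e‖ ^ 2 / ‖x‖ ^ 4
  rw [real_inner_self_eq_norm_sq, nsmul_eq_mul]
  field_simp
  ring

theorem laplacian_inv_norm_sq [FiniteDimensional ℝ E] (hx : x ≠ 0) :
    Δ (fun y : E => (‖y‖ ^ 2)⁻¹) x = (8 - 2 * Module.finrank ℝ E) / ‖x‖ ^ 4 := by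
  rw [laplacian_eq_iteratedFDeriv_stdOrthonormalBasis]
  simp only [iteratedFDeriv_two_apply, Matrix.cons_val_zero, Matrix.cons_val_one,
    fderiv_fderiv_inv_norm_sq_apply_self hx]
  rw [Finset.sum_sub_distrib, ← Finset.sum_div, ← Finset.sum_div, ← Finset.mul_sum,
    ← Finset.mul_sum, OrthonormalBasis.sum_sq_inner_left]
  simp
  field_simp

end InverseNormSq

theorem mem_posTangentConeAt_closedBall_of_inner_neg {E : Type*} [NormedAddCommGroup E]
    [InnerProductSpace ℝ E] {x y : E} {r : ℝ} (hx : ‖x‖ ≤ r) (hxy : ⟪x, y⟫ < 0) :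
    y ∈ posTangentConeAt (closedBall 0 r) x := by
  have hy : 0 < ‖y‖ ^ 2 := by
    have : y ≠ 0 := by rintro rfl; simp at hxy
    positivity
  refine mem_posTangentConeAt_of_frequently_mem (Eventually.frequently ?_)
  filter_upwards [Ioo_mem_nhdsGT (show (0 : ℝ) < -2 * ⟪x, y⟫ / ‖y‖ ^ 2 by
    apply div_pos <;> linarith)] with t ⟨ht₀, ht⟩
  rw [lt_div_iff₀ hy] at ht
  have hsq : ‖x + t • y‖ ^ 2 ≤ r ^ 2 := by
    rw [norm_add_sq_real, inner_smul_right, norm_smul, mul_pow, Real.norm_eq_abs, sq_abs]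
    nlinarith [norm_nonneg x]
  rw [mem_closedBall_zero_iff]
  exact le_of_pow_le_pow_left₀ two_ne_zero ((norm_nonneg x).trans hx) hsq

theorem exists_isMaxOn_annulus_add_smul_inv_norm_sq {f : ℂ → ℝ} {r R ε : ℝ} (hr : 0 < r)
    (hrR : r ≤ R) (hε : 0 < ε) (hf : ContinuousOn f (closedBall 0 R \ ball 0 r))
    (hf₂ : ContDiffOn ℝ 2 f (ball 0 R \ closedBall 0 r))
    (hsub : ∀ z ∈ ball 0 R \ closedBall 0 r, 0 ≤ lap f z) :
    ∃ p, (‖p‖ = r ∨ ‖p‖ = R) ∧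
      IsMaxOn (f + ε • fun z => (‖z‖ ^ 2)⁻¹) (closedBall 0 R \ ball 0 r) p := by
  set K : Set ℂ := closedBall 0 R \ ball 0 r
  set U : Set ℂ := ball 0 R \ closedBall 0 r
  set h : ℂ → ℝ := fun z => (‖z‖ ^ 2)⁻¹
  have hU : IsOpen U := isOpen_ball.sdiff isClosed_closedBall
  have hUK : U ⊆ K := Set.sdiff_subset_sdiff ball_subset_closedBall ball_subset_closedBall
  have hK : IsCompact K := (isCompact_closedBall _ _).diff isOpen_ball
  have hKne : K.Nonempty := ⟨R, by simp [K, abs_of_nonneg (hr.le.trans hrR), hrR]⟩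
  have hne {z : ℂ} (hz : z ∈ K) : z ≠ 0 := by
    rintro rfl
    exact hz.2 (mem_ball_self hr)
  have hh₂ {z : ℂ} (hz : z ∈ K) : ContDiffAt ℝ 2 h z :=
    (contDiffAt_inv ℝ (by simpa using hne hz)).comp z (contDiff_norm_sq ℝ).contDiffAt
  have hεh₂ {z : ℂ} (hz : z ∈ K) : ContDiffAt ℝ 2 (ε • h) z := (hh₂ hz).const_smul ε
  have hf₂' {z : ℂ} (hz : z ∈ U) : ContDiffAt ℝ 2 f z := hf₂.contDiffAt (hU.mem_nhds hz)
  have hg₂ {z : ℂ} (hz : z ∈ U) : ContDiffAt ℝ 2 (f + ε • h) z :=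
    (hf₂' hz).add (hεh₂ (hUK hz))
  have hΔ {z : ℂ} (hz : z ∈ U) : 0 < Δ (f + ε • h) z := by
    rw [(hf₂' hz).laplacian_add (hεh₂ (hUK hz)), laplacian_smul _ (hh₂ (hUK hz)),
      ← lap_eq_laplacian (hf₂' hz), laplacian_inv_norm_sq (hne (hUK hz)),
      Complex.finrank_real_complex]
    have hfz : 0 ≤ lap f z := hsub z hz
    have hz0 : 0 < ‖z‖ := norm_pos_iff.mpr (hne (hUK hz))
    simp only [smul_eq_mul]
    norm_num
    positivity
  have hcont : ContinuousOn (f + ε • h) K :=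
    hf.add fun z hz => (hεh₂ hz).continuousAt.continuousWithinAt
  obtain ⟨p, ⟨hpK, hpU⟩, hp⟩ :=
    hK.exists_isMaxOn_mem_diff_of_laplacian_pos hKne hU hUK hcont (fun z hz => hg₂ hz)
      (fun z hz => hΔ hz)
  refine ⟨p, ?_, hp⟩
  simp only [K, U, Set.mem_sdiff, mem_closedBall_zero_iff, mem_ball_zero_iff, not_lt] at hpK hpU
  by_contra! hp'
  exact hpU ⟨lt_of_le_of_ne hpK.1 hp'.2, (lt_of_le_of_ne hpK.2 hp'.1.symm).not_ge⟩

theorem exists_pos_isLocalMaxOn_add_smul_inv_norm_sq {f : ℂ → ℝ} {z₀ : ℂ}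
    (hf : ContinuousOn f (closedBall 0 1)) (hf₂ : ContDiffOn ℝ 2 f (ball 0 1))
    (hsub : ∀ z ∈ ball (0 : ℂ) 1, 0 ≤ lap f z) (hz₀ : ‖z₀‖ = 1)
    (hmax : ∀ z ∈ closedBall (0 : ℂ) 1, z ≠ z₀ → f z < f z₀) :
    ∃ ε > (0 : ℝ),
      IsLocalMaxOn (f + ε • fun z => (‖z‖ ^ 2)⁻¹) (closedBall 0 1) z₀ := by
  have hinner : sphere (0 : ℂ) (1 / 2) ⊆ closedBall 0 1 :=
    sphere_subset_closedBall.trans (closedBall_subset_closedBall (by norm_num))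
  obtain ⟨q, hq, hqmax⟩ := (isCompact_sphere (0 : ℂ) (1 / 2)).exists_isMaxOn
    (NormedSpace.sphere_nonempty.mpr (by norm_num)) (hf.mono hinner)
  have hfq : f q < f z₀ := hmax q (hinner hq) (by rintro rfl; norm_num [hz₀] at hq)
  -- The barrier is `4` on the inner circle and `1` on the outer one; this `ε` makes
  -- `f + ε • barrier ≤ f z₀ + ε` on both.
  set ε := (f z₀ - f q) / 3 with hε_def
  have hε : 0 < ε := by rw [hε_def]; linarith
  set g := f + ε • fun z : ℂ => (‖z‖ ^ 2)⁻¹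
  obtain ⟨p, hp, hpmax⟩ := exists_isMaxOn_annulus_add_smul_inv_norm_sq (r := 1 / 2) (R := 1)
    (by norm_num) (by norm_num) hε (hf.mono Set.sdiff_subset) (hf₂.mono Set.sdiff_subset)
    fun z hz => hsub z hz.1
  have hgp : g p ≤ g z₀ := by
    rcases eq_or_ne p z₀ with rfl | hpz₀
    · exact le_rfl
    simp only [g, Pi.add_apply, Pi.smul_apply, smul_eq_mul, hz₀]
    rcases hp with hp | hp
    · have : f p ≤ f q := hqmax (show p ∈ sphere 0 (1 / 2) by simpa using hp)
      rw [hp]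
      linarith
    · have := hmax p (by simp [hp]) hpz₀
      rw [hp]
      linarith
  refine ⟨ε, hε, ?_⟩
  filter_upwards [inter_mem_nhdsWithin _ (ball_mem_nhds z₀ (half_pos one_pos))]
    with z ⟨hzD, hz⟩
  refine (hpmax ⟨hzD, ?_⟩).trans hgp
  rw [mem_ball, dist_comm, dist_eq_norm] at hz
  rw [mem_ball_zero_iff, not_lt]
  linarith [norm_sub_norm_le z₀ z]

/-- Hopf-type boundary lemma on the closed unit disk: a weakly subharmonic function
attaining its strict maximum at a boundary point has strictly positive outward
directional derivative there. -/
theorem stmt1 (f : ℂ → ℝ) (z₀ : ℂ)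
    (hf1 : ContDiffOn ℝ 1 f (Metric.closedBall 0 1))
    (hf2 : ContDiffOn ℝ 2 f (Metric.ball 0 1))
    (hsub : ∀ z ∈ Metric.ball (0 : ℂ) 1, 0 ≤ lap f z)
    (hz₀ : z₀ ∈ Metric.sphere (0 : ℂ) 1)
    (hmax : ∀ z ∈ Metric.closedBall (0 : ℂ) 1, z ≠ z₀ → f z < f z₀)
    (X : ℂ) (hX : 0 < (X * (starRingEnd ℂ) z₀).re) :
    0 < fderivWithin ℝ f (Metric.closedBall 0 1) z₀ X := by
  have hz₀1 : ‖z₀‖ = 1 := by simpa using hz₀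
  obtain ⟨ε, hε, hloc⟩ :=
    exists_pos_isLocalMaxOn_add_smul_inv_norm_sq hf1.continuousOn hf2 hsub hz₀1 hmax
  have hz₀0 : z₀ ≠ 0 := norm_ne_zero_iff.mp (by rw [hz₀1]; exact one_ne_zero)
  have hderiv :=
    (hf1.differentiableOn one_ne_zero z₀ (sphere_subset_closedBall hz₀)).hasFDerivWithinAt.add
      ((hasFDerivAt_inv_norm_sq hz₀0).hasFDerivWithinAt.const_smul ε)
  have hX' : 0 < ⟪z₀, X⟫ := by rwa [Complex.inner]
  have hnonpos := hloc.hasFDerivWithinAt_nonpos hderiv (y := -X)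
    (mem_posTangentConeAt_closedBall_of_inner_neg hz₀1.le (by rw [inner_neg_right]; linarith))
  rw [add_apply, smul_apply, smul_apply, innerSL_apply_apply, map_neg, inner_neg_right, hz₀1,
    smul_eq_mul, smul_eq_mul] at hnonpos
  nlinarith
end

section
/- Let f : D² → ℂ be holomorphic on the closed unit disk with power series f(z) = Σ_{k≥0} a_k z^k, satisfying conj(z)f(z) + z·conj(f(z)) = c on ∂D² for a real constant c, f(0) = 0, and Im f(1) = 0 . Then c = 0 forces f ≡ 0. -/
/-!
Since `f(0) = 0` we have `f(z) = z g(z)` with `g(z) = Σ a_{k+1} z^k`, and for `|z| = 1` the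
boundary expression `z̄ f(z) + z f(z)̄` equals `2 Re g(z)`. Hence `ḡ = -g` on the circle.
Conjugation sends the `n`-th Fourier coefficient to the conjugate of the `(-n)`-th one, and a power
series has no negative frequencies, so `a_{k+1} = 0` for `k ≥ 1` and `a₁` is purely imaginary.
Then `f(1) = a₁` is real as well, so `a₁ = 0`.
-/

open ComplexConjugate MeasureTheory AddCircle

section FourierCoeff

variable {T : ℝ} [Fact (0 < T)]

theorem fourierCoeff_conj (f : AddCircle T → ℂ) (n : ℤ) :
    fourierCoeff (fun x => conj (f x)) n = conj (fourierCoeff f (-n)) := by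
  simp only [fourierCoeff, smul_eq_mul, ← integral_conj, map_mul, neg_neg, ← fourier_neg]

theorem fourierCoeff_tsum_mul_fourier {ι : Type*} [Countable ι] {c : ι → ℂ}
    (hc : Summable fun i => ‖c i‖) (m : ι → ℤ) (n : ℤ) :
    fourierCoeff (T := T) (fun x => ∑' i, c i * fourier (m i) x) n
      = ∑' i, c i * Pi.single (M := fun _ => ℂ) (m i) 1 n := by
  have hint : ∀ i, Integrable (fun x : AddCircle T => fourier (-n) x * (c i * fourier (m i) x))
      haarAddCircle := fun i =>
    ((map_continuous (fourier (m i))).integrable_of_hasCompactSupport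
      (HasCompactSupport.of_compactSpace _) |>.const_mul (c i)).fourier_smul (-n)
  have hnorm : ∀ i, ∫ x : AddCircle T, ‖fourier (-n) x * (c i * fourier (m i) x)‖ ∂haarAddCircle
      = ‖c i‖ := by
    intro i
    simp only [norm_mul, fourier_apply, Circle.norm_coe, one_mul, mul_one,
      integral_const, probReal_univ, one_smul]
  simp_rw [fourierCoeff, smul_eq_mul, ← tsum_mul_left]
  rw [← integral_tsum_of_summable_integral_norm hint (by simpa only [hnorm])]
  congr 1 with i
  rw [← fourierCoeff_fourier (T := T), ← fourierCoeff.const_mul]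
  rfl

variable {b : ℕ → ℂ}

theorem fourierCoeff_tsum_mul_fourier_natCast (hb : Summable fun k => ‖b k‖) (n : ℕ) :
    fourierCoeff (T := T) (fun x => ∑' k : ℕ, b k * fourier k x) n = b n := by
  rw [fourierCoeff_tsum_mul_fourier hb, tsum_eq_single n fun k hk => by simp [hk]]
  simp

theorem fourierCoeff_tsum_mul_fourier_natCast_of_neg (hb : Summable fun k => ‖b k‖) {n : ℤ}
    (hn : n < 0) : fourierCoeff (T := T) (fun x => ∑' k : ℕ, b k * fourier k x) n = 0 := by
  rw [fourierCoeff_tsum_mul_fourier hb]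
  simp [show ∀ k : ℕ, n ≠ k by omega]

end FourierCoeff

theorem re_coeff_zero_eq_zero_and_coeff_eq_zero_of_re_eq_zero_on_circle {b : ℕ → ℂ}
    (hb : Summable fun k => ‖b k‖) (hre : ∀ z : ℂ, ‖z‖ = 1 → (∑' k, b k * z ^ k).re = 0) :
    (b 0).re = 0 ∧ ∀ n, n ≠ 0 → b n = 0 := by
  have : Fact ((0 : ℝ) < 1) := ⟨one_pos⟩
  set F : AddCircle (1 : ℝ) → ℂ := fun x => ∑' k : ℕ, b k * fourier k x
  have hconj (n : ℤ) : conj (fourierCoeff F (-n)) = -fourierCoeff F n := by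
    rw [← fourierCoeff_conj, ← neg_one_mul, ← fourierCoeff.const_mul]
    congr 1 with x
    have hx := hre (toCircle x) (Circle.norm_coe _)
    simp only [F, fourier_apply, toCircle_zsmul, zpow_natCast, Circle.coe_pow]
    apply Complex.ext <;> simp [hx]
  constructor
  · have h0 := hconj 0
    rw [neg_zero, ← Nat.cast_zero, fourierCoeff_tsum_mul_fourier_natCast hb 0] at h0
    have h0re := congrArg Complex.re h0
    simp only [Complex.conj_re, Complex.neg_re] at h0re
    linarith
  · intro n hn
    have hn' := hconj n
    rw [fourierCoeff_tsum_mul_fourier_natCast_of_neg hb (by omega),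
      fourierCoeff_tsum_mul_fourier_natCast hb, map_zero, zero_eq_neg] at hn'
    exact hn'

theorem tsum_mul_pow_eq_mul_tsum_succ {a : ℕ → ℂ} {z : ℂ} (h0 : a 0 = 0)
    (hs : Summable fun k => a k * z ^ k) :
    ∑' k, a k * z ^ k = z * ∑' k, a (k + 1) * z ^ k := by
  rw [hs.tsum_eq_zero_add, h0, zero_mul, zero_add, ← tsum_mul_left]
  congr 1 with k
  ring

theorem conj_mul_mul_add_mul_conj_mul (z w : ℂ) :
    conj z * (z * w) + z * conj (z * w) = ((2 * Complex.normSq z * w.re : ℝ) : ℂ) := by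
  apply Complex.ext <;> simp [Complex.normSq_apply] <;> ring

/-- A holomorphic function `f(z) = Σ aₖ zᵏ` on the closed unit disk satisfying the
boundary condition `z̄·f(z) + z·f(z)̄ = c` on the circle with `c = 0`, `f(0) = 0`
and `Im f(1) = 0` vanishes identically. -/
theorem stmt16 (c : ℝ) (a : ℕ → ℂ) (hsum : Summable fun k => ‖a k‖)
    (hbc : ∀ z : ℂ, ‖z‖ = 1 →
      (starRingEnd ℂ) z * (∑' k, a k * z ^ k)
          + z * (starRingEnd ℂ) (∑' k, a k * z ^ k) = ((c : ℝ) : ℂ))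
    (h0 : a 0 = 0)
    (h1 : (∑' k, a k * (1 : ℂ) ^ k).im = 0)
    (hc : c = 0) :
    ∀ k, a k = 0 := by
  subst hc
  have hb : Summable fun k => ‖a (k + 1)‖ := (summable_nat_add_iff 1).mpr hsum
  have hf (z : ℂ) (hz : ‖z‖ = 1) : ∑' k, a k * z ^ k = z * ∑' k, a (k + 1) * z ^ k :=
    tsum_mul_pow_eq_mul_tsum_succ h0 (.of_norm (by simpa [hz] using hsum))
  obtain ⟨hre, hcoeff⟩ :=
      re_coeff_zero_eq_zero_and_coeff_eq_zero_of_re_eq_zero_on_circle hb fun z hz => by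
    have hz' : Complex.normSq z = 1 := by rw [Complex.normSq_eq_norm_sq, hz, one_pow]
    have hbcz := hbc z hz
    rw [hf z hz, conj_mul_mul_add_mul_conj_mul, hz'] at hbcz
    simpa using hbcz
  have him : (a 1).im = 0 := by
    rw [hf 1 norm_one, one_mul, tsum_eq_single 0 fun k hk => by simp [hcoeff k hk]] at h1
    simpa using h1
  rintro (_ | _ | n)
  · exact h0
  · exact Complex.ext hre him
  · exact hcoeff (n + 1) n.succ_ne_zero
end
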